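/- For finite strictly decreasing lists p = [p₀, p₁, …, p_m] and q = [q₀, q₁, …, q_n] of ordinals (entries in strictly decreasing order), p precedes q in the lexicographic order List.Lex (· < ·) if and only if ω^{p₀} + ω^{p₁} + ⋯ + ω^{p_m} < ω^{q₀} + ω^{q₁} + ⋯ + ω^{q_n} in ordinal arithmetic (where the empty sum is 0). In particular, the map sending a strictly decreasing list p to the ordinal sum of ω^{p_i} over its entries in order is an order embedding of the paper's default ordering of [Ord]^{<ω} into the ordinals. -/

import Mathlib

/-!
The map `p ↦ Σ ω ^ pᵢ` is strictly monotone for the lexicographic order, and lexicographic order on lists of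
ordinals is linear, so it reflects the order as well. For strict monotonicity, the only
nontrivial case is a first difference `a < b` of the heads: the sum of the powers
`ω ^ a + ⋯`, all of whose exponents are below `b`, stays below `ω ^ b` because `ω ^ b` is
additively principal.
-/

open Ordinal

theorem sum_map_omega0_opow_lt_of_forall_lt {l : List Ordinal} {a : Ordinal}
    (h : ∀ x ∈ l, x < a) : (l.map (omega0 ^ ·)).sum < omega0 ^ a := by
  induction l with
  | nil => simpa using opow_pos a omega0_pos
  | cons x l ih =>
    rw [List.forall_mem_cons] at h
    exact isPrincipal_add_omega0_opow a
      ((opow_lt_opow_iff_right one_lt_omega0).2 h.1) (ih h.2)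

theorem sum_map_omega0_opow_cons_lt_of_lt {l : List Ordinal} {a b : Ordinal}
    (hl : (b :: l).Pairwise (· > ·)) (hba : b < a) :
    ((b :: l).map (omega0 ^ ·)).sum < omega0 ^ a :=
  sum_map_omega0_opow_lt_of_forall_lt <| List.forall_mem_cons.2
    ⟨hba, fun _ hx => (List.rel_of_pairwise_cons hl hx).trans hba⟩

theorem strictMonoOn_sum_map_omega0_opow :
    StrictMonoOn (fun l : List Ordinal => (l.map (omega0 ^ ·)).sum)
      {l | l.Pairwise (· > ·)} := by
  intro p hp q hq hpq
  replace hpq := (List.lt_iff_lex_lt p q).1 hpq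
  induction hpq with
  | nil => exact (opow_pos _ omega0_pos).trans_le le_self_add
  | cons _ ih =>
    simpa only [List.map_cons, List.sum_cons, add_lt_add_iff_left] using
      ih hp.of_cons hq.of_cons
  | rel hab => exact (sum_map_omega0_opow_cons_lt_of_lt hp hab).trans_le le_self_add

/-- For strictly decreasing lists `p`, `q` of ordinals, `p` lexicographically precedes
`q` if and only if `ω^{p₀} + ⋯ + ω^{p_m} < ω^{q₀} + ⋯ + ω^{q_n}`. -/
theorem lex_iff_sum_omega_opow_lt (p q : List Ordinal)
    (hp : p.Pairwise (· > ·)) (hq : q.Pairwise (· > ·)) :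
    List.Lex (· < ·) p q ↔
      (p.map fun a => omega0 ^ a).sum < (q.map fun a => omega0 ^ a).sum :=
  ((strictMonoOn_sum_map_omega0_opow.lt_iff_lt hp hq).trans (List.lt_iff_lex_lt p q)).symm
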